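/- An entire function g : ℂ → ℂ of the form g(z) = z + z^{k+1} + O(z^{k+2}) (with k ≥ 1) is not conjugate near 0 to a rotation; more precisely, the iterates g^n(z) = z + n z^{k+1} + O(z^{k+2}), so the family (g^n) is not normal (equicontinuous) on any neighborhood of 0. -/

import Mathlib

/-!
Each iterate adds one more `z ^ (k + 1)`: if `w(z) = z + c z^(k+1) + O(z^(k+2))`, then
`g(w(z)) = w(z) + w(z)^(k+1) + O(z^(k+2))`, and `w^(k+1) - z^(k+1) = O(z^k · z^(k+1))` is
negligible because `k ≥ 1`. So the `(k+1)`-st derivative of `g^[n]` at `0` is `n (k+1)!`.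
On the other hand, an equicontinuous family of entire maps fixing `0` is uniformly bounded on a
small circle around `0`, and Cauchy's estimates then bound all its `(k+1)`-st derivatives at `0`.
-/

open Filter Topology Asymptotics

section PowerAsymptotics

variable {𝕜 : Type*} [NormedField 𝕜]

theorem isBigO_pow_pow_of_le {m n : ℕ} (h : m ≤ n) :
    (fun x : 𝕜 => x ^ n) =O[𝓝 0] fun x => x ^ m := by
  rcases h.eq_or_lt with rfl | h
  · exact isBigO_refl _ _
  · exact (isLittleO_pow_pow h).isBigO

theorem Asymptotics.IsBigO.pow_sub_pow {α : Type*} {l : Filter α} {u v φ : α → 𝕜}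
    (hu : u =O[l] φ) (hv : v =O[l] φ) (j : ℕ) :
    (fun x => u x ^ (j + 1) - v x ^ (j + 1)) =O[l] fun x => φ x ^ j * (u x - v x) := by
  have hsum : (fun x => ∑ i ∈ Finset.range (j + 1), u x ^ i * v x ^ (j + 1 - 1 - i))
      =O[l] fun x => φ x ^ j :=
    IsBigO.fun_sum fun i hi => by
      have hij : i + (j + 1 - 1 - i) = j := by
        have := Finset.mem_range.1 hi; omega
      simpa only [← pow_add, hij] using (hu.pow i).mul (hv.pow (j + 1 - 1 - i))
  exact (hsum.mul (isBigO_refl (fun x => u x - v x) l)).congr_left fun x => geom_sum₂_mul _ _ _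

end PowerAsymptotics

section Parabolic

variable {𝕜 : Type*} [NormedField 𝕜] {g : 𝕜 → 𝕜} {k : ℕ}

theorem isBigO_comp_sub_sub_mul_pow (hk : 1 ≤ k)
    (hg : (fun z => g z - z - z ^ (k + 1)) =O[𝓝 0] fun z => z ^ (k + 2))
    {w : 𝕜 → 𝕜} {c : 𝕜}
    (hw : (fun z => w z - z - c * z ^ (k + 1)) =O[𝓝 0] fun z => z ^ (k + 2)) :
    (fun z => g (w z) - z - (c + 1) * z ^ (k + 1)) =O[𝓝 0] fun z => z ^ (k + 2) := by
  have hw_sub : (fun z => w z - z) =O[𝓝 0] fun z => z ^ (k + 1) :=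
    ((hw.trans (isBigO_pow_pow_of_le (by omega))).add
      ((isBigO_refl _ _).const_mul_left c)).congr_left fun z => by ring
  have hw_id : w =O[𝓝 0] fun z => z :=
    ((hw_sub.trans (by simpa using isBigO_pow_pow_of_le (𝕜 := 𝕜) (Nat.le_add_left 1 k))).add
      (isBigO_refl _ _)).congr_left fun z => by ring
  have hg_w : (fun z => g (w z) - w z - w z ^ (k + 1)) =O[𝓝 0] fun z => z ^ (k + 2) :=
    (hg.comp_tendsto (hw_id.trans_tendsto tendsto_id)).trans (hw_id.pow (k + 2))
  have hpow : (fun z => w z ^ (k + 1) - z ^ (k + 1)) =O[𝓝 0] fun z => z ^ (k + 2) :=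
    ((hw_id.pow_sub_pow (isBigO_refl _ _) k).trans ((isBigO_refl _ _).mul hw_sub)).trans <|
      (isBigO_pow_pow_of_le (by omega : k + 2 ≤ k + (k + 1))).congr_left fun z =>
        pow_add z k (k + 1)
  exact (hw.add (hg_w.add hpow)).congr_left fun z => by ring

theorem isBigO_iterate_sub_sub_mul_pow (hk : 1 ≤ k)
    (hg : (fun z => g z - z - z ^ (k + 1)) =O[𝓝 0] fun z => z ^ (k + 2)) (n : ℕ) :
    (fun z => g^[n] z - z - n * z ^ (k + 1)) =O[𝓝 0] fun z => z ^ (k + 2) := by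
  induction n with
  | zero => simpa using isBigO_zero _ _
  | succ n ih =>
    simpa only [Function.iterate_succ_apply', Nat.cast_succ] using
      isBigO_comp_sub_sub_mul_pow hk hg ih

end Parabolic

section AnalyticOrder

variable {𝕜 E : Type*} [NontriviallyNormedField 𝕜] [NormedAddCommGroup E] [NormedSpace 𝕜 E]
  {f f₁ f₂ : 𝕜 → E} {z₀ : 𝕜} {m : ℕ}

theorem AnalyticAt.natCast_le_analyticOrderAt_of_isBigO (hf : AnalyticAt 𝕜 f z₀)
    (h : f =O[𝓝 z₀] fun z => (z - z₀) ^ m) : (m : ℕ∞) ≤ analyticOrderAt f z₀ := by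
  by_contra! hlt
  -- an order `d < m` would make `‖f z‖` comparable to `‖z - z₀‖ ^ d`
  obtain ⟨d, hd⟩ := ENat.ne_top_iff_exists.1 hlt.ne_top
  have hdm : d < m := by rw [← hd] at hlt; exact_mod_cast hlt
  obtain ⟨F, hF, hF₀, hfF⟩ := hf.analyticOrderAt_eq_natCast.1 hd.symm
  have hF_near : ∀ᶠ z in 𝓝 z₀, ‖F z₀‖ / 2 < ‖F z‖ :=
    hF.continuousAt.norm.eventually (lt_mem_nhds (half_lt_self (norm_pos_iff.2 hF₀)))
  have hlower : (fun z => (z - z₀) ^ d) =O[𝓝 z₀] f := by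
    refine IsBigO.of_bound (2 / ‖F z₀‖) ?_
    filter_upwards [hfF, hF_near] with z hz hFz
    rw [hz, norm_smul, div_mul_eq_mul_div, le_div_iff₀ (norm_pos_iff.2 hF₀)]
    nlinarith [norm_nonneg ((z - z₀) ^ d)]
  have hsmall : (fun z => (z - z₀) ^ m) =o[𝓝 z₀] fun z => (z - z₀) ^ d :=
    (isLittleO_pow_pow hdm).comp_tendsto (tendsto_sub_nhds_zero_iff.2 tendsto_id)
  have hne : ∃ᶠ z in 𝓝 z₀, (z - z₀) ^ m ≠ 0 :=
    ((eventually_mem_nhdsWithin (a := z₀) (s := {z₀}ᶜ)).mono fun z hz =>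
      pow_ne_zero m (sub_ne_zero.2 hz)).frequently.filter_mono nhdsWithin_le_nhds
  exact hsmall.not_isBigO hne (hlower.trans h)

variable [CharZero 𝕜] [CompleteSpace E]

theorem iteratedDeriv_eq_of_isBigO_sub (hf₁ : AnalyticAt 𝕜 f₁ z₀) (hf₂ : AnalyticAt 𝕜 f₂ z₀)
    (h : (f₁ - f₂) =O[𝓝 z₀] fun z => (z - z₀) ^ m) {i : ℕ} (hi : i < m) :
    iteratedDeriv i f₁ z₀ = iteratedDeriv i f₂ z₀ := by
  have hsub := (hf₁.sub hf₂).natCast_le_analyticOrderAt_of_isBigO h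
  rw [natCast_le_analyticOrderAt_iff_iteratedDeriv_eq_zero (hf₁.sub hf₂)] at hsub
  rw [← sub_eq_zero, ← iteratedDeriv_sub hf₁.contDiffAt hf₂.contDiffAt]
  exact hsub i hi

end AnalyticOrder

theorem iteratedDeriv_eq_mul_factorial_of_isBigO {𝕜 : Type*} [NontriviallyNormedField 𝕜]
    [CharZero 𝕜] [CompleteSpace 𝕜] {f : 𝕜 → 𝕜} (hf : AnalyticAt 𝕜 f 0) {k : ℕ} (hk : 1 ≤ k) (c : 𝕜)
    (h : (fun z => f z - z - c * z ^ (k + 1)) =O[𝓝 0] fun z => z ^ (k + 2)) :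
    iteratedDeriv (k + 1) f 0 = c * (k + 1).factorial := by
  have hpoly : AnalyticAt 𝕜 (fun z => z + c * z ^ (k + 1)) 0 := by fun_prop
  rw [iteratedDeriv_eq_of_isBigO_sub hf hpoly (m := k + 2) _ (Nat.lt_succ_self _),
    iteratedDeriv_fun_add (by fun_prop) (by fun_prop), iteratedDeriv_const_mul_field,
    iteratedDeriv_fun_id_zero, iteratedDeriv_fun_pow_zero]
  · rw [if_neg (by omega), if_pos rfl, zero_add]
  · simpa only [sub_zero] using h.congr_left fun z => by rw [Pi.sub_apply]; ring

theorem EquicontinuousOn.equicontinuousAt {ι X α : Type*} [TopologicalSpace X] [UniformSpace α]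
    {F : ι → X → α} {S : Set X} {x₀ : X} (h : EquicontinuousOn F S) (hS : S ∈ 𝓝 x₀) :
    EquicontinuousAt F x₀ := by
  simpa only [EquicontinuousAt, EquicontinuousWithinAt, nhdsWithin_eq_nhds.2 hS] using
    h x₀ (mem_of_mem_nhds hS)

theorem Complex.exists_forall_norm_iteratedDeriv_le_of_equicontinuousAt {ι E : Type*}
    [NormedAddCommGroup E] [NormedSpace ℂ E] [CompleteSpace E] {F : ι → ℂ → E} {c : ℂ}
    (hF : ∀ i, Differentiable ℂ (F i)) (hFc : ∀ i, F i c = 0) (h : EquicontinuousAt F c)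
    (j : ℕ) : ∃ C, ∀ i, ‖iteratedDeriv j (F i) c‖ ≤ C := by
  obtain ⟨δ, hδ, hδF⟩ := Metric.equicontinuousAt_iff.1 h 1 one_pos
  refine ⟨j.factorial * 1 / (δ / 2) ^ j, fun i =>
    Complex.norm_iteratedDeriv_le_of_forall_mem_sphere_norm_le j (half_pos hδ)
      (hF i).diffContOnCl fun z hz => ?_⟩
  have hzδ : dist z c < δ := by rw [Metric.mem_sphere.1 hz]; exact half_lt_self hδ
  simpa [hFc] using (hδF z hzδ i).le

/-- A parabolic germ `g(z) = z + z^{k+1} + O(z^{k+2})` has iterates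
`g^n(z) = z + n z^{k+1} + O(z^{k+2})`, and the family of iterates is not
normal (not equicontinuous) on any neighborhood of `0`. -/
theorem parabolic_not_normal
    (g : ℂ → ℂ) (hg : Differentiable ℂ g) (k : ℕ) (hk : 1 ≤ k)
    (hform : (fun z : ℂ => g z - z - z ^ (k + 1)) =O[𝓝 0] fun z : ℂ => z ^ (k + 2)) :
    (∀ n : ℕ, (fun z : ℂ => g^[n] z - z - (n : ℂ) * z ^ (k + 1))
        =O[𝓝 0] fun z : ℂ => z ^ (k + 2)) ∧
    ∀ U ∈ 𝓝 (0 : ℂ), ¬ EquicontinuousOn (fun n : ℕ => g^[n]) U := by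
  have hiter := isBigO_iterate_sub_sub_mul_pow hk hform
  refine ⟨hiter, fun U hU hequi => ?_⟩
  have hfix (n : ℕ) : g^[n] 0 = 0 := by
    simpa using (hiter n).eq_zero_imp.self_of_nhds
  obtain ⟨C, hC⟩ := Complex.exists_forall_norm_iteratedDeriv_le_of_equicontinuousAt
    (fun n => hg.iterate n) hfix (hequi.equicontinuousAt hU) (k + 1)
  obtain ⟨n, hn⟩ := exists_nat_gt C
  have hbound := hC n
  rw [iteratedDeriv_eq_mul_factorial_of_isBigO ((hg.iterate n).analyticAt 0) hk _ (hiter n),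
    norm_mul, Complex.norm_natCast, Complex.norm_natCast] at hbound
  have hfact : (1 : ℝ) ≤ (k + 1).factorial := by exact_mod_cast (k + 1).factorial_pos
  linarith [le_mul_of_one_le_right (Nat.cast_nonneg n) hfact]
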